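/- Let N ≥ 2, let x¹, …, x^N ∈ ℝ^d, fix i ∈ {1, …, N}, and let m^N = (1/N)∑_{j=1}^N δ_{x^j} and m^{N,−i} = (1/(N−1))∑_{j≠i} δ_{x^j}. Then the squared 2-Wasserstein distance satisfies d₂²(m^N, m^{N,−i}) ≤ (1/(N(N−1))) ∑_{j≠i} |x^i − x^j|². -/

import Mathlib

open MeasureTheory
open scoped BigOperators ENNReal

/-- Squared 2-Wasserstein distance, defined as the infimum over couplings of the
integral of the squared distance. -/
noncomputable def wasserstein2Sq {d : ℕ}
    (μ ν : Measure (EuclideanSpace ℝ (Fin d))) : ℝ :=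
  sInf { r : ℝ |
    ∃ γ : Measure (EuclideanSpace ℝ (Fin d) × EuclideanSpace ℝ (Fin d)),
      IsProbabilityMeasure γ ∧ γ.map Prod.fst = μ ∧ γ.map Prod.snd = ν ∧
      r = ∫ z, ‖z.1 - z.2‖ ^ 2 ∂γ }

/-!
The squared Wasserstein distance is at most the cost of any coupling. Couple the two empirical
measures by leaving the mass `1/N` at each `x j`, `j ≠ i`, in place and spreading the mass `1/N`
at `x i` uniformly, `1/(N(N-1))` to each `x j`; only that mass moves, at cost
`1/(N(N-1)) * ∑ j ≠ i, ‖x i - x j‖²`.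
-/

lemma wasserstein2Sq_le_integral {d : ℕ} {μ ν : Measure (EuclideanSpace ℝ (Fin d))}
    (γ : Measure (EuclideanSpace ℝ (Fin d) × EuclideanSpace ℝ (Fin d)))
    [IsProbabilityMeasure γ] (hfst : γ.map Prod.fst = μ) (hsnd : γ.map Prod.snd = ν) :
    wasserstein2Sq μ ν ≤ ∫ z, ‖z.1 - z.2‖ ^ 2 ∂γ :=
  csInf_le ⟨0, fun _ ⟨_, _, _, _, hr⟩ => hr ▸ integral_nonneg fun _ => by positivity⟩
    ⟨γ, ‹_›, hfst, hsnd, rfl⟩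

namespace ENNReal

lemma inv_mul_sub_one_mul_sub_one {a : ℝ≥0∞} (ha : 1 < a) (ha' : a ≠ ∞) :
    (a * (a - 1))⁻¹ * (a - 1) = a⁻¹ := by
  have h0 : a - 1 ≠ 0 := (tsub_pos_of_lt ha).ne'
  have htop : a - 1 ≠ ∞ := sub_ne_top ha'
  rw [ENNReal.mul_inv (.inr htop) (.inr h0), mul_assoc, ENNReal.inv_mul_cancel h0 htop, mul_one]

lemma inv_add_inv_mul_sub_one {a : ℝ≥0∞} (ha : 1 < a) (ha' : a ≠ ∞) :
    a⁻¹ + (a * (a - 1))⁻¹ = (a - 1)⁻¹ := by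
  have h0 : a - 1 ≠ 0 := (tsub_pos_of_lt ha).ne'
  have htop : a - 1 ≠ ∞ := sub_ne_top ha'
  calc a⁻¹ + (a * (a - 1))⁻¹ = (a * (a - 1))⁻¹ * (a - 1 + 1) := by
        rw [mul_add, mul_one, inv_mul_sub_one_mul_sub_one ha ha']
    _ = (a - 1)⁻¹ := by
        rw [tsub_add_cancel_of_le ha.le, mul_comm a, ENNReal.mul_inv (.inl h0) (.inl htop),
          mul_assoc, ENNReal.inv_mul_cancel (zero_lt_one.trans ha).ne' ha', mul_one]

end ENNReal

namespace MeasureTheory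

lemma Measure.map_finsetSum_dirac {α β ι : Type*} [MeasurableSpace α] [MeasurableSpace β]
    {f : α → β} (hf : Measurable f) (s : Finset ι) (a : ι → α) :
    (∑ j ∈ s, dirac (a j)).map f = ∑ j ∈ s, dirac (f (a j)) := by
  rw [← mapₗ_apply_of_measurable hf, _root_.map_sum]
  simp only [mapₗ_apply_of_measurable hf, map_dirac' hf]

lemma integral_smul_finsetSum_dirac {α E ι : Type*} [MeasurableSpace α]
    [MeasurableSingletonClass α] [NormedAddCommGroup E] [NormedSpace ℝ E] [CompleteSpace E]
    (c : ℝ≥0∞) (s : Finset ι) (a : ι → α) (f : α → E) :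
    ∫ z, f z ∂(c • ∑ j ∈ s, Measure.dirac (a j)) = c.toReal • ∑ j ∈ s, f (a j) := by
  rw [integral_smul_measure, integral_finsetSum_measure fun j _ => integrable_dirac enorm_lt_top]
  simp only [integral_dirac]

lemma integrable_smul_finsetSum_dirac {α E ι : Type*} [MeasurableSpace α]
    [MeasurableSingletonClass α] [NormedAddCommGroup E] {c : ℝ≥0∞} (hc : c ≠ ∞)
    (s : Finset ι) (a : ι → α) (f : α → E) :
    Integrable f (c • ∑ j ∈ s, Measure.dirac (a j)) :=
  (integrable_finsetSum_measure.mpr fun _ _ => integrable_dirac enorm_lt_top).smul_measure hc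

end MeasureTheory

section RemovalCoupling

variable {α ι : Type*} [MeasurableSpace α] [Fintype ι] [DecidableEq ι]

noncomputable def removalCoupling (x : ι → α) (i : ι) : Measure (α × α) :=
  (Fintype.card ι : ℝ≥0∞)⁻¹ • ∑ j ∈ Finset.univ.erase i, Measure.dirac (x j, x j) +
    ((Fintype.card ι : ℝ≥0∞) * (Fintype.card ι - 1))⁻¹ •
      ∑ j ∈ Finset.univ.erase i, Measure.dirac (x i, x j)

variable (x : ι → α) (i : ι)

lemma map_fst_removalCoupling (hι : 1 < Fintype.card ι) :
    (removalCoupling x i).map Prod.fst =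
      (Fintype.card ι : ℝ≥0∞)⁻¹ • ∑ j, Measure.dirac (x j) := by
  have hcard : ((Finset.univ.erase i).card : ℝ≥0∞) = Fintype.card ι - 1 := by
    rw [Finset.card_erase_of_mem (Finset.mem_univ i), Finset.card_univ, ENNReal.natCast_sub,
      Nat.cast_one]
  rw [removalCoupling, Measure.map_add _ _ measurable_fst, Measure.map_smul, Measure.map_smul,
    Measure.map_finsetSum_dirac measurable_fst, Measure.map_finsetSum_dirac measurable_fst]
  dsimp only
  rw [← Finset.sum_erase_add _ _ (Finset.mem_univ i), smul_add, Finset.sum_const,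
    ← Nat.cast_smul_eq_nsmul ℝ≥0∞, smul_smul, hcard,
    ENNReal.inv_mul_sub_one_mul_sub_one (by exact_mod_cast hι) (ENNReal.natCast_ne_top _)]

lemma map_snd_removalCoupling (hι : 1 < Fintype.card ι) :
    (removalCoupling x i).map Prod.snd =
      ((Fintype.card ι : ℝ≥0∞) - 1)⁻¹ • ∑ j ∈ Finset.univ.erase i, Measure.dirac (x j) := by
  rw [removalCoupling, Measure.map_add _ _ measurable_snd, Measure.map_smul, Measure.map_smul,
    Measure.map_finsetSum_dirac measurable_snd, Measure.map_finsetSum_dirac measurable_snd,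
    ← add_smul, ENNReal.inv_add_inv_mul_sub_one (by exact_mod_cast hι) (ENNReal.natCast_ne_top _)]

lemma isProbabilityMeasure_removalCoupling (hι : 1 < Fintype.card ι) :
    IsProbabilityMeasure (removalCoupling x i) := by
  rw [← Measure.isProbabilityMeasure_map_iff measurable_fst.aemeasurable,
    map_fst_removalCoupling x i hι]
  constructor
  simp [ENNReal.inv_mul_cancel, (zero_lt_one.trans hι).ne']

lemma integral_removalCoupling [MeasurableSingletonClass α] {E : Type*} [NormedAddCommGroup E]
    [NormedSpace ℝ E] [CompleteSpace E] (hι : 1 < Fintype.card ι) (f : α × α → E) :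
    ∫ z, f z ∂removalCoupling x i =
      ((Fintype.card ι : ℝ≥0∞)⁻¹).toReal • ∑ j ∈ Finset.univ.erase i, f (x j, x j) +
        (((Fintype.card ι : ℝ≥0∞) * (Fintype.card ι - 1))⁻¹).toReal •
          ∑ j ∈ Finset.univ.erase i, f (x i, x j) := by
  have hN : (Fintype.card ι : ℝ≥0∞) ≠ 0 := by exact_mod_cast (zero_lt_one.trans hι).ne'
  have hN1 : (Fintype.card ι : ℝ≥0∞) - 1 ≠ 0 := (tsub_pos_of_lt (by exact_mod_cast hι)).ne'
  rw [removalCoupling, integral_add_measure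
    (integrable_smul_finsetSum_dirac (ENNReal.inv_ne_top.mpr hN) _ _ _)
    (integrable_smul_finsetSum_dirac (ENNReal.inv_ne_top.mpr (mul_ne_zero hN hN1)) _ _ _),
    integral_smul_finsetSum_dirac, integral_smul_finsetSum_dirac]

end RemovalCoupling

lemma integral_sq_dist_removalCoupling {E ι : Type*} [NormedAddCommGroup E] [MeasurableSpace E]
    [MeasurableSingletonClass E] [Fintype ι] [DecidableEq ι] (x : ι → E) (i : ι)
    (hι : 1 < Fintype.card ι) :
    ∫ z, ‖z.1 - z.2‖ ^ 2 ∂removalCoupling x i =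
      1 / ((Fintype.card ι : ℝ) * (Fintype.card ι - 1)) *
        ∑ j ∈ Finset.univ.erase i, ‖x i - x j‖ ^ 2 := by
  rw [integral_removalCoupling x i hι]
  simp [ENNReal.toReal_sub_of_le (by exact_mod_cast hι.le : (1 : ℝ≥0∞) ≤ Fintype.card ι)]

theorem stmt5 {d : ℕ} (N : ℕ) (hN : 2 ≤ N)
    (x : Fin N → EuclideanSpace ℝ (Fin d)) (i : Fin N) :
    wasserstein2Sq
      ((N : ℝ≥0∞)⁻¹ • ∑ j : Fin N, Measure.dirac (x j))
      (((N : ℝ≥0∞) - 1)⁻¹ • ∑ j ∈ Finset.univ.erase i, Measure.dirac (x j))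
    ≤ (1 / ((N : ℝ) * ((N : ℝ) - 1))) * ∑ j ∈ Finset.univ.erase i, ‖x i - x j‖ ^ 2 := by
  have hcard : 1 < Fintype.card (Fin N) := by rw [Fintype.card_fin]; omega
  have hprob := isProbabilityMeasure_removalCoupling x i hcard
  simpa only [Fintype.card_fin, integral_sq_dist_removalCoupling x i hcard] using
    wasserstein2Sq_le_integral (removalCoupling x i)
      (map_fst_removalCoupling x i hcard) (map_snd_removalCoupling x i hcard)
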